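/- arXiv:1905.01305 — 3 statements merged into one kernel-verified Lean document; each statement's English description precedes it below -/
import Mathlib

section
/- Neutrality of zero for the interpreted sum: in any adjunction for algebraic manipulation, for all objects W, V of V, the composite +̂ ∘ (U(0_{W,V}) × id_{UV}) : UW × UV → UV equals the second projection π₂, where 0_{W,V} : W → V is the zero morphism of the additive category V. -/
open CategoryTheory CategoryTheory.Limits MonoidalCategory CartesianMonoidalCategory

universe v₁ v₂ u₁ u₂

/-- The data of a lax monoidal structure on a functor between monoidal categories,
with the usual naturality and coherence axioms. -/
structure LaxMonData {C : Type u₁} {D : Type u₂} [Category.{v₁} C] [Category.{v₂} D]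
    [MonoidalCategory C] [MonoidalCategory D] (F : C ⥤ D) where
  ε : 𝟙_ D ⟶ F.obj (𝟙_ C)
  μ : ∀ X Y : C, F.obj X ⊗ F.obj Y ⟶ F.obj (X ⊗ Y)
  μ_natural : ∀ {X Y X' Y' : C} (f : X ⟶ X') (g : Y ⟶ Y'),
      (F.map f ⊗ₘ F.map g) ≫ μ X' Y' = μ X Y ≫ F.map (f ⊗ₘ g)
  associativity : ∀ X Y Z : C,
      (μ X Y ⊗ₘ 𝟙 (F.obj Z)) ≫ μ (X ⊗ Y) Z ≫ F.map (α_ X Y Z).hom =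
        (α_ (F.obj X) (F.obj Y) (F.obj Z)).hom ≫ (𝟙 (F.obj X) ⊗ₘ μ Y Z) ≫ μ X (Y ⊗ Z)
  left_unitality : ∀ X : C,
      (λ_ (F.obj X)).hom = (ε ⊗ₘ 𝟙 (F.obj X)) ≫ μ (𝟙_ C) X ≫ F.map (λ_ X).hom
  right_unitality : ∀ X : C,
      (ρ_ (F.obj X)).hom = (𝟙 (F.obj X) ⊗ₘ ε) ≫ μ X (𝟙_ C) ≫ F.map (ρ_ X).hom

variable (C : Type u₁) [Category.{v₁} C] [CartesianMonoidalCategory C] [MonoidalClosed C]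
variable (V : Type u₂) [Category.{v₂} V] [MonoidalCategory V] [SymmetricCategory V]
  [MonoidalClosed V] [Preadditive V] [MonoidalPreadditive V]
  [HasZeroObject V] [HasBinaryBiproducts V]

/-- A monoidal adjunction `(S,m) ⊣ (U,n)` between a Cartesian closed category `C`
and an additive symmetric monoidal closed category `V` with bi-additive tensor:
`S` and `U` are lax monoidal functors, `S ⊣ U`, and the unit and counit of the
adjunction are monoidal natural transformations. -/
structure MonAdjData where
  S : C ⥤ V
  U : V ⥤ C
  m : LaxMonData S
  n : LaxMonData U
  adj : S ⊣ U
  unit_tensor : ∀ X Y : C,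
      (adj.unit.app X ⊗ₘ adj.unit.app Y) ≫ n.μ (S.obj X) (S.obj Y) ≫ U.map (m.μ X Y) =
        adj.unit.app (X ⊗ Y)
  unit_unit : adj.unit.app (𝟙_ C) = n.ε ≫ U.map m.ε
  counit_tensor : ∀ X Y : V,
      (m.μ (U.obj X) (U.obj Y) ≫ S.map (n.μ X Y)) ≫ adj.counit.app (X ⊗ Y) =
        (adj.counit.app X ⊗ₘ adj.counit.app Y)
  counit_unit : (m.ε ≫ S.map n.ε) ≫ adj.counit.app (𝟙_ V) = 𝟙 (𝟙_ V)

namespace MonAdjData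

variable {C V}
variable (M : MonAdjData C V)

/-- The canonical comparison map `p : UV × UW ⟶ U(V ⊕ W)` obtained from the adjunction. -/
noncomputable def p (X Y : V) : M.U.obj X ⊗ M.U.obj Y ⟶ M.U.obj (X ⊞ Y) :=
  (M.adj.homEquiv _ _)
    (biprod.lift ((M.adj.homEquiv _ _).symm (fst (M.U.obj X) (M.U.obj Y)))
      ((M.adj.homEquiv _ _).symm (snd (M.U.obj X) (M.U.obj Y))))

/-- The interpreted sum `+̂ = U∇ ∘ p : UV × UV ⟶ UV`. -/
noncomputable def hatPlus (X : V) : M.U.obj X ⊗ M.U.obj X ⟶ M.U.obj X :=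
  M.p X X ≫ M.U.map (biprod.desc (𝟙 X) (𝟙 X))

end MonAdjData

/-- The map `d = (id×σ×id) ∘ (id×Δ) : (X×X)×Y ⟶ (X×Y)×(X×Y)` in a Cartesian category. -/
noncomputable def dMap {C : Type u₁} [Category.{v₁} C] [CartesianMonoidalCategory C] (X Y : C) : (X ⊗ X) ⊗ Y ⟶ (X ⊗ Y) ⊗ (X ⊗ Y) :=
  (𝟙 (X ⊗ X) ⊗ₘ lift (𝟙 Y) (𝟙 Y)) ≫
    lift (lift (fst _ _ ≫ fst _ _) (snd _ _ ≫ fst _ _))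
      (lift (fst _ _ ≫ snd _ _) (snd _ _ ≫ snd _ _))

/-- The distributivity isomorphism `δ = ⟨π₁⊗id, π₂⊗id⟩ : (X⊕X)⊗Y ⟶ (X⊗Y)⊕(X⊗Y)` in `V`. -/
noncomputable def δMap {V : Type u₂} [Category.{v₂} V] [MonoidalCategory V] [Preadditive V]
    [HasBinaryBiproducts V] (X Y : V) : (X ⊞ X) ⊗ Y ⟶ (X ⊗ Y) ⊞ (X ⊗ Y) :=
  biprod.lift ((biprod.fst : X ⊞ X ⟶ X) ⊗ₘ 𝟙 Y) ((biprod.snd : X ⊞ X ⟶ X) ⊗ₘ 𝟙 Y)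

namespace MonAdjData
variable {C : Type u₁} [Category.{v₁} C] [CartesianMonoidalCategory C] [MonoidalClosed C]
variable {V : Type u₂} [Category.{v₂} V] [MonoidalCategory V] [SymmetricCategory V]
  [MonoidalClosed V] [Preadditive V] [MonoidalPreadditive V]
  [HasZeroObject V] [HasBinaryBiproducts V]
variable (M : MonAdjData C V)

/-- The scalar map `s_α = U(λ⁻¹) ∘ U(id ⊗ α) ∘ U(λ) : UW ⟶ UW` associated with a scalar
`α : I ⟶ I`. -/
noncomputable def scal (α : 𝟙_ V ⟶ 𝟙_ V) (W : V) : M.U.obj W ⟶ M.U.obj W :=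
  M.U.map ((ρ_ W).inv ≫ (𝟙 W ⊗ₘ α) ≫ (ρ_ W).hom)

end MonAdjData

/-- An *adjunction for algebraic manipulation* (Definition 3 of the paper):
a monoidal adjunction `(S,m) ⊣ (U,n)` between a Cartesian closed category and an additive
symmetric monoidal closed category with bi-additive tensor, satisfying axioms (A0) and (A⊗),
together with an object `𝔹` and maps `i₁, i₂ : 1 ⟶ 𝔹` with the stated universal property. -/
structure AlgAdj extends MonAdjData C V where
  A0 : ∀ {A : C} {V₁ V₂ W : V} (f : A ⟶ toMonAdjData.U.obj V₁)
      (g : A ⟶ toMonAdjData.U.obj V₂),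
      f ≫ toMonAdjData.U.map (0 : V₁ ⟶ W) = g ≫ toMonAdjData.U.map (0 : V₂ ⟶ W)
  Atensor : ∀ X Y : V,
      (toMonAdjData.p X X ⊗ₘ 𝟙 (toMonAdjData.U.obj Y)) ≫
          toMonAdjData.n.μ (X ⊞ X) Y ≫ toMonAdjData.U.map (δMap X Y) =
        dMap (toMonAdjData.U.obj X) (toMonAdjData.U.obj Y) ≫
          (toMonAdjData.n.μ X Y ⊗ₘ toMonAdjData.n.μ X Y) ≫
            toMonAdjData.p (X ⊗ Y) (X ⊗ Y)
  Bobj : C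
  i₁ : 𝟙_ C ⟶ Bobj
  i₂ : 𝟙_ C ⟶ Bobj
  Bprop : ∀ {A : C} (f g : 𝟙_ C ⟶ A), ∃! h : Bobj ⟶ A, i₁ ≫ h = f ∧ i₂ ≫ h = g


variable {C : Type u₁} [Category.{v₁} C] [CartesianMonoidalCategory C] [MonoidalClosed C]
variable {V : Type u₂} [Category.{v₂} V] [MonoidalCategory V] [SymmetricCategory V]
  [MonoidalClosed V] [Preadditive V] [MonoidalPreadditive V]
  [HasZeroObject V] [HasBinaryBiproducts V]

/-! The comparison map `p` is natural and followed by `U(π₂)` it is `π₂`. Hence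
`+̂ ∘ (U0 × id) = U(∇ ∘ (0 ⊕ id)) ∘ p = U(π₂) ∘ p = π₂`. -/

namespace MonAdjData

omit [MonoidalClosed C] [SymmetricCategory V] [MonoidalClosed V] [MonoidalPreadditive V]
  [HasZeroObject V]

variable (M : MonAdjData C V)

theorem p_map_fst (X Y : V) : M.p X Y ≫ M.U.map biprod.fst = fst (M.U.obj X) (M.U.obj Y) := by
  rw [p, ← Adjunction.homEquiv_naturality_right, biprod.lift_fst, Equiv.apply_symm_apply]

theorem p_map_snd (X Y : V) : M.p X Y ≫ M.U.map biprod.snd = snd (M.U.obj X) (M.U.obj Y) := by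
  rw [p, ← Adjunction.homEquiv_naturality_right, biprod.lift_snd, Equiv.apply_symm_apply]

/-- Transposing along `S ⊣ U` reduces this to the extensionality of maps into `X ⊞ Y`. -/
theorem hom_ext_biprod {A : C} {X Y : V} {h h' : A ⟶ M.U.obj (X ⊞ Y)}
    (h_fst : h ≫ M.U.map biprod.fst = h' ≫ M.U.map biprod.fst)
    (h_snd : h ≫ M.U.map biprod.snd = h' ≫ M.U.map biprod.snd) : h = h' := by
  apply (M.adj.homEquiv _ _).symm.injective
  ext
  · simpa only [Adjunction.homEquiv_naturality_right_symm] using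
      congrArg (M.adj.homEquiv _ _).symm h_fst
  · simpa only [Adjunction.homEquiv_naturality_right_symm] using
      congrArg (M.adj.homEquiv _ _).symm h_snd

theorem tensorHom_map_comp_p {X Y X' Y' : V} (f : X ⟶ X') (g : Y ⟶ Y') :
    (M.U.map f ⊗ₘ M.U.map g) ≫ M.p X' Y' = M.p X Y ≫ M.U.map (biprod.map f g) := by
  apply M.hom_ext_biprod
  · rw [Category.assoc, p_map_fst, tensorHom_fst, Category.assoc, ← Functor.map_comp,
      biprod.map_fst, Functor.map_comp, ← Category.assoc, p_map_fst]
  · rw [Category.assoc, p_map_snd, tensorHom_snd, Category.assoc, ← Functor.map_comp,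
      biprod.map_snd, Functor.map_comp, ← Category.assoc, p_map_snd]

end MonAdjData

/-- Neutrality of zero for the interpreted sum: in any adjunction for
algebraic manipulation, the composite `+̂ ∘ (U(0) × id) : UW × UV ⟶ UV` equals the second
projection, where `0 : W ⟶ V` is the zero morphism of the additive category `V`. -/
theorem hatPlus_zero_left (M : AlgAdj C V) (W X : V) :
    (M.toMonAdjData.U.map (0 : W ⟶ X) ⊗ₘ 𝟙 (M.toMonAdjData.U.obj X)) ≫
        M.toMonAdjData.hatPlus X =
      snd (M.toMonAdjData.U.obj W) (M.toMonAdjData.U.obj X) := by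
  have codiag_after_zero :
      biprod.map (0 : W ⟶ X) (𝟙 X) ≫ biprod.desc (𝟙 X) (𝟙 X) = biprod.snd := by
    ext <;> simp
  rw [MonAdjData.hatPlus, ← M.U.map_id, ← Category.assoc, MonAdjData.tensorHom_map_comp_p,
    Category.assoc, ← Functor.map_comp, codiag_after_zero, MonAdjData.p_map_snd]
end

section
/- Factorization of interpreted scalars over the sum: in any adjunction for algebraic manipulation, for every object W of V and all scalars α, β ∈ V(I,I), one has +̂ ∘ (s_α × s_β) ∘ Δ = s_{α+β} : UW → UW, where Δ : UW → UW × UW is the diagonal of the Cartesian product in C and α+β is the sum of α and β in the abelian group V(I,I) of the additive category V. -/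
/-! Write `a = ρ⁻¹ ∘ (id ⊗ α) ∘ ρ` and `b` for the endomorphisms of `W` underlying `s_α` and `s_β`,
so that `(s_α × s_β) ∘ Δ = ⟨U a, U b⟩`. Since `p` is the transpose of the pairing of the
transposed projections, naturality of the adjunction gives `p ∘ ⟨U a, U b⟩ = U⟨a, b⟩`, hence
`+̂ ∘ ⟨U a, U b⟩ = U(∇ ∘ ⟨a, b⟩) = U(a + b)`; and `a + b` is the endomorphism underlying
`s_{α+β}` because the tensor product is bi-additive. -/

open CategoryTheory CategoryTheory.Limits MonoidalCategory CartesianMonoidalCategory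

universe v₁ v₂ u₁ u₂

variable (C : Type u₁) [Category.{v₁} C] [CartesianMonoidalCategory C] [MonoidalClosed C]
variable (V : Type u₂) [Category.{v₂} V] [MonoidalCategory V] [SymmetricCategory V]
  [MonoidalClosed V] [Preadditive V] [MonoidalPreadditive V]
  [HasZeroObject V] [HasBinaryBiproducts V]

variable {C : Type u₁} [Category.{v₁} C] [CartesianMonoidalCategory C] [MonoidalClosed C]
variable {V : Type u₂} [Category.{v₂} V] [MonoidalCategory V] [SymmetricCategory V]
  [MonoidalClosed V] [Preadditive V] [MonoidalPreadditive V]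
  [HasZeroObject V] [HasBinaryBiproducts V]

section ScalarAction

variable {𝒱 : Type u₂} [Category.{v₂} 𝒱] [MonoidalCategory 𝒱]

noncomputable def scalarAction (α : 𝟙_ 𝒱 ⟶ 𝟙_ 𝒱) (W : 𝒱) : W ⟶ W :=
  (ρ_ W).inv ≫ (𝟙 W ⊗ₘ α) ≫ (ρ_ W).hom

theorem scalarAction_add [Preadditive 𝒱] [MonoidalPreadditive 𝒱] (α β : 𝟙_ 𝒱 ⟶ 𝟙_ 𝒱)
    (W : 𝒱) : scalarAction (α + β) W = scalarAction α W + scalarAction β W := by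
  simp only [scalarAction, MonoidalPreadditive.tensor_add, Preadditive.add_comp,
    Preadditive.comp_add]

end ScalarAction

namespace MonAdjData

variable {𝒞 : Type u₁} [Category.{v₁} 𝒞] [CartesianMonoidalCategory 𝒞]
  {𝒱 : Type u₂} [Category.{v₂} 𝒱] [MonoidalCategory 𝒱] (M : MonAdjData 𝒞 𝒱)

theorem scal_eq_map_scalarAction (α : 𝟙_ 𝒱 ⟶ 𝟙_ 𝒱) (W : 𝒱) :
    M.scal α W = M.U.map (scalarAction α W) :=
  rfl

variable [Preadditive 𝒱] [HasBinaryBiproducts 𝒱]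

theorem lift_map_comp_p {W X Y : 𝒱} (f : W ⟶ X) (g : W ⟶ Y) :
    lift (M.U.map f) (M.U.map g) ≫ M.p X Y = M.U.map (biprod.lift f g) := by
  have transpose :
      M.S.map (lift (M.U.map f) (M.U.map g)) ≫
          biprod.lift ((M.adj.homEquiv _ _).symm (fst (M.U.obj X) (M.U.obj Y)))
            ((M.adj.homEquiv _ _).symm (snd (M.U.obj X) (M.U.obj Y))) =
        M.adj.counit.app W ≫ biprod.lift f g := by
    apply biprod.hom_ext <;>
      simp [Adjunction.homEquiv_counit, ← Functor.map_comp_assoc]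
  rw [p, ← Adjunction.homEquiv_naturality_left, transpose, Adjunction.homEquiv_unit,
    Functor.map_comp, M.adj.right_triangle_components_assoc]

theorem lift_map_comp_hatPlus {W X : 𝒱} (f g : W ⟶ X) :
    lift (M.U.map f) (M.U.map g) ≫ M.hatPlus X = M.U.map (f + g) := by
  rw [hatPlus, ← Category.assoc, lift_map_comp_p, ← Functor.map_comp, biprod.lift_desc,
    Category.comp_id, Category.comp_id]

end MonAdjData

/-- Factorization of interpreted scalars over the sum: in any adjunction
for algebraic manipulation, `+̂ ∘ (s_α × s_β) ∘ Δ = s_{α+β}` on `UW`, where `Δ` is the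
diagonal of the Cartesian product of `C` and `α+β` is the sum in the abelian group
`V(I,I)`. -/
theorem scal_fact (M : AlgAdj C V) (W : V) (α β : 𝟙_ V ⟶ 𝟙_ V) :
    lift (𝟙 (M.toMonAdjData.U.obj W)) (𝟙 (M.toMonAdjData.U.obj W)) ≫
        (M.toMonAdjData.scal α W ⊗ₘ M.toMonAdjData.scal β W) ≫ M.toMonAdjData.hatPlus W =
      M.toMonAdjData.scal (α + β) W := by
  simp only [MonAdjData.scal_eq_map_scalarAction]
  rw [lift_map_assoc, Category.id_comp, Category.id_comp,
    MonAdjData.lift_map_comp_hatPlus, scalarAction_add]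
end

section
/- Distributivity of interpreted scalar action over the interpreted sum: in any adjunction for algebraic manipulation, for every object W of V and every scalar α ∈ V(I,I), one has s_α ∘ +̂ = +̂ ∘ (s_α × s_α) : UW × UW → UW. -/
open CategoryTheory CategoryTheory.Limits MonoidalCategory CartesianMonoidalCategory

universe v₁ v₂ u₁ u₂

variable (C : Type u₁) [Category.{v₁} C] [CartesianMonoidalCategory C] [MonoidalClosed C]
variable (V : Type u₂) [Category.{v₂} V] [MonoidalCategory V] [SymmetricCategory V]
  [MonoidalClosed V] [Preadditive V] [MonoidalPreadditive V]
  [HasZeroObject V] [HasBinaryBiproducts V]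

variable {C : Type u₁} [Category.{v₁} C] [CartesianMonoidalCategory C] [MonoidalClosed C]
variable {V : Type u₂} [Category.{v₂} V] [MonoidalCategory V] [SymmetricCategory V]
  [MonoidalClosed V] [Preadditive V] [MonoidalPreadditive V]
  [HasZeroObject V] [HasBinaryBiproducts V]

/-! `s_α` is `U` applied to a morphism of `V`, so it suffices that `+̂ = U∇ ∘ p` is natural
with respect to maps of `V`: `p` is natural because it is the transpose of a map assembled from
the counit and the projections, and the codiagonal `∇` is natural in any category with biproducts. -/

namespace MonAdjData

variable (M : MonAdjData C V)

lemma p_natural {X X' Y Y' : V} (f : X ⟶ X') (g : Y ⟶ Y') :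
    (M.U.map f ⊗ₘ M.U.map g) ≫ M.p X' Y' = M.p X Y ≫ M.U.map (biprod.map f g) := by
  apply (M.adj.homEquiv _ _).symm.injective
  rw [p, p, M.adj.homEquiv_naturality_left_symm, M.adj.homEquiv_naturality_right_symm,
    Equiv.symm_apply_apply, Equiv.symm_apply_apply]
  apply biprod.hom_ext
  · rw [Category.assoc, Category.assoc, biprod.lift_fst, biprod.map_fst, ← Category.assoc,
      biprod.lift_fst, ← M.adj.homEquiv_naturality_left_symm,
      ← M.adj.homEquiv_naturality_right_symm, tensorHom_fst]
  · rw [Category.assoc, Category.assoc, biprod.lift_snd, biprod.map_snd, ← Category.assoc,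
      biprod.lift_snd, ← M.adj.homEquiv_naturality_left_symm,
      ← M.adj.homEquiv_naturality_right_symm, tensorHom_snd]

lemma hatPlus_natural {X Y : V} (f : X ⟶ Y) :
    M.hatPlus X ≫ M.U.map f = (M.U.map f ⊗ₘ M.U.map f) ≫ M.hatPlus Y := by
  have codiag_natural : biprod.desc (𝟙 X) (𝟙 X) ≫ f = biprod.map f f ≫ biprod.desc (𝟙 Y) (𝟙 Y) :=
    biprod.hom_ext' _ _ (by simp) (by simp)
  rw [hatPlus, hatPlus, Category.assoc, ← M.U.map_comp, codiag_natural, M.U.map_comp,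
    reassoc_of% M.p_natural f f]

end MonAdjData

/-- Distributivity of the interpreted scalar action over the interpreted
sum: in any adjunction for algebraic manipulation, `s_α ∘ +̂ = +̂ ∘ (s_α × s_α)` as maps
`UW × UW ⟶ UW`. -/
theorem scal_distrib (M : AlgAdj C V) (W : V) (α : 𝟙_ V ⟶ 𝟙_ V) :
    M.toMonAdjData.hatPlus W ≫ M.toMonAdjData.scal α W =
      (M.toMonAdjData.scal α W ⊗ₘ M.toMonAdjData.scal α W) ≫ M.toMonAdjData.hatPlus W :=
  M.toMonAdjData.hatPlus_natural _
end
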